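/- With u sorted nonincreasingly, u₀ > 0, γ ≥ 1, Φ(S) = max { u(S')/(u(S')+u₀) : S' ⊆ S, |S'| ≤ γ }, and ρ_j(T) = Φ(T∪{j}) − Φ(T): for any S ⊆ [n] with |S| ≥ γ + 1, the submodular inequality w ≤ Φ(S) + ∑_{j∉S} ρ_j(S)x_j − ∑_{j∈S} ρ_j([n]\{j})(1−x_j) coincides (as a function of (w,x)) with the one defined by S^γ, i.e., Φ(S) = Φ(S^γ), ρ_j(S) = ρ_j(S^γ) for j ∉ S, ρ_j([n]\{j}) = 0 and ρ_j(S^γ) = 0 for j ∈ S\S^γ. -/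

import Mathlib

/-!
If `A ⊆ B` and `A` contains `γ` elements lying below every element of `B \ A`, then
`Φ(B) = Φ(A)`: in a feasible `S' ⊆ B`, each element outside `A` can be swapped for an unused
one of those `γ` elements, which is smaller and hence, `u` being nonincreasing, at least as
heavy; and `x ↦ x / (x + u₀)` is increasing. Since `S^γ` consists of the `γ` smallest elements
of `S`, each of the claimed identities is an instance of this with the `γ` elements being `S^γ`.
-/

open Finset

/-- The probability function `Φ(S) = max { u(S')/(u(S')+u₀) : S' ⊆ S, |S'| ≤ γ }`. -/
noncomputable def Phi (γ : ℕ) (u : ℕ → ℝ) (u0 : ℝ) (S : Finset ℕ) : ℝ :=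
  ((S.powerset.filter fun S' => S'.card ≤ γ).image
      fun S' => (∑ j ∈ S', u j) / ((∑ j ∈ S', u j) + u0)).max'
    (Finset.Nonempty.image ⟨∅, Finset.mem_filter.mpr ⟨Finset.empty_mem_powerset S, by simp⟩⟩ _)

/-- `k_S = n+1` if `|S| ≤ γ-1`, otherwise the `γ`-th smallest element of `S`. -/
def kS (γ n : ℕ) (S : Finset ℕ) : ℕ :=
  if S.card ≤ γ - 1 then n + 1 else (S.sort (· ≤ ·)).getD (γ - 1) 0

/-- `S^γ = S ∩ [k_S]`. -/
def Sgamma (γ n : ℕ) (S : Finset ℕ) : Finset ℕ :=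
  S ∩ Finset.Icc 1 (kS γ n S)

theorem Finset.sum_le_sum_of_card_eq_of_le {ι M : Type*} [AddCommMonoid M] [LinearOrder M]
    [IsOrderedAddMonoid M] (f : ι → M) {s t : Finset ι} (hcard : #s = #t)
    (h : ∀ a ∈ s, ∀ b ∈ t, f a ≤ f b) : ∑ a ∈ s, f a ≤ ∑ b ∈ t, f b := by
  rcases s.eq_empty_or_nonempty with rfl | hs
  · rw [card_empty, eq_comm, card_eq_zero] at hcard
    simp [hcard]
  obtain ⟨a, ha, hmax⟩ := exists_max_image s f hs
  calc ∑ a ∈ s, f a ≤ #s • f a := sum_le_card_nsmul s f _ hmax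
    _ = #t • f a := by rw [hcard]
    _ ≤ ∑ b ∈ t, f b := card_nsmul_le_sum t f _ (h a ha)

theorem div_add_le_div_add {K : Type*} [Field K] [LinearOrder K] [IsStrictOrderedRing K]
    {s t c : K} (hc : 0 < c) (hs : 0 ≤ s) (hst : s ≤ t) :
    s / (s + c) ≤ t / (t + c) := by
  rw [div_le_div_iff₀ (by positivity) (by linarith)]
  nlinarith

theorem Finset.filter_le_orderEmbOfFin {α : Type*} [LinearOrder α] (s : Finset α) {k : ℕ}
    (h : #s = k) (i : Fin k) :
    s.filter (· ≤ s.orderEmbOfFin h i) = (Iic i).map (s.orderEmbOfFin h).toEmbedding := by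
  ext a
  simp only [mem_filter, mem_map, mem_Iic, RelEmbedding.coe_toEmbedding]
  constructor
  · rintro ⟨ha, hai⟩
    obtain ⟨j, rfl⟩ : a ∈ Set.range (s.orderEmbOfFin h) := by simpa using ha
    exact ⟨j, (s.orderEmbOfFin h).le_iff_le.mp hai, rfl⟩
  · rintro ⟨j, hji, rfl⟩
    exact ⟨s.orderEmbOfFin_mem h j, (s.orderEmbOfFin h).le_iff_le.mpr hji⟩

theorem Finset.card_filter_le_orderEmbOfFin {α : Type*} [LinearOrder α] (s : Finset α) {k : ℕ}
    (h : #s = k) (i : Fin k) : #(s.filter (· ≤ s.orderEmbOfFin h i)) = i + 1 := by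
  rw [filter_le_orderEmbOfFin, card_map, Fin.card_Iic]

section Phi

variable {γ : ℕ} {u : ℕ → ℝ} {u0 : ℝ}

theorem le_Phi {S S' : Finset ℕ} (hS' : S' ⊆ S) (hcard : #S' ≤ γ) :
    (∑ j ∈ S', u j) / ((∑ j ∈ S', u j) + u0) ≤ Phi γ u u0 S :=
  le_max' _ _ (mem_image_of_mem (fun T => (∑ j ∈ T, u j) / ((∑ j ∈ T, u j) + u0))
    (mem_filter.mpr ⟨mem_powerset.mpr hS', hcard⟩))

theorem Phi_le {S : Finset ℕ} {c : ℝ}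
    (h : ∀ S' ⊆ S, #S' ≤ γ → (∑ j ∈ S', u j) / ((∑ j ∈ S', u j) + u0) ≤ c) :
    Phi γ u u0 S ≤ c := by
  refine max'_le _ _ _ fun y hy => ?_
  obtain ⟨S', hS', rfl⟩ := mem_image.mp hy
  rw [mem_filter, mem_powerset] at hS'
  exact h S' hS'.1 hS'.2

theorem Phi_mono {A B : Finset ℕ} (hAB : A ⊆ B) : Phi γ u u0 A ≤ Phi γ u u0 B :=
  Phi_le fun _ hS' hcard => le_Phi (hS'.trans hAB) hcard

theorem exists_subset_sum_le_of_forall_lt {A B C S' : Finset ℕ} (hanti : AntitoneOn u B)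
    (hAB : A ⊆ B) (hCA : C ⊆ A) (hC : γ ≤ #C) (hlt : ∀ c ∈ C, ∀ b ∈ B \ A, c < b)
    (hS'B : S' ⊆ B) (hS' : #S' ≤ γ) :
    ∃ S'' ⊆ A, #S'' ≤ γ ∧ ∑ j ∈ S', u j ≤ ∑ j ∈ S'', u j := by
  have hroom : #(S' \ A) ≤ #(C \ S') := by
    have hCS' : #(C ∩ S') ≤ #(S' ∩ A) :=
      card_le_card fun x hx => by
        rw [mem_inter] at hx ⊢
        exact ⟨hx.2, hCA hx.1⟩
    have h1 := card_sdiff_add_card_inter C S'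
    have h2 := card_sdiff_add_card_inter S' A
    omega
  obtain ⟨R, hRC, hR⟩ := exists_subset_card_eq hroom
  have hdisj : Disjoint (S' ∩ A) R :=
    disjoint_left.mpr fun x hx hxR => (mem_sdiff.mp (hRC hxR)).2 (mem_inter.mp hx).1
  refine ⟨S' ∩ A ∪ R, union_subset inter_subset_right (hRC.trans (sdiff_subset.trans hCA)),
    ?_, ?_⟩
  · calc #(S' ∩ A ∪ R) = #(S' ∩ A) + #(S' \ A) := by rw [card_union_of_disjoint hdisj, hR]
      _ = #S' := by rw [add_comm, card_sdiff_add_card_inter]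
      _ ≤ γ := hS'
  · rw [← sum_inter_add_sum_sdiff S' A, sum_union hdisj]
    refine add_le_add le_rfl (sum_le_sum_of_card_eq_of_le u hR.symm fun b hb r hr => ?_)
    have hrC := (mem_sdiff.mp (hRC hr)).1
    exact hanti (hAB (hCA hrC)) (hS'B (mem_sdiff.mp hb).1)
      (hlt r hrC b (sdiff_subset_sdiff hS'B subset_rfl hb)).le

theorem Phi_eq_of_forall_lt {A B C : Finset ℕ} (hu0 : 0 < u0) (hnn : ∀ j ∈ B, 0 ≤ u j)
    (hanti : AntitoneOn u B) (hAB : A ⊆ B) (hCA : C ⊆ A) (hC : γ ≤ #C)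
    (hlt : ∀ c ∈ C, ∀ b ∈ B \ A, c < b) : Phi γ u u0 B = Phi γ u u0 A := by
  refine le_antisymm (Phi_le fun S' hS'B hS' => ?_) (Phi_mono hAB)
  obtain ⟨S'', hS''A, hS'', hsum⟩ :=
    exists_subset_sum_le_of_forall_lt hanti hAB hCA hC hlt hS'B hS'
  exact (div_add_le_div_add hu0 (sum_nonneg fun j hj => hnn j (hS'B hj)) hsum).trans
    (le_Phi hS''A hS'')

end Phi

section Sgamma

variable {γ n : ℕ} {S : Finset ℕ}

theorem kS_eq_orderEmbOfFin (hγ : 1 ≤ γ) (hS : γ ≤ #S) :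
    kS γ n S = S.orderEmbOfFin rfl ⟨γ - 1, by omega⟩ := by
  rw [kS, if_neg (by omega), orderEmbOfFin_apply,
    List.getD_eq_getElem _ _ (by rw [length_sort]; omega)]
  rfl

theorem Sgamma_subset : Sgamma γ n S ⊆ S := inter_subset_left

theorem card_Sgamma (hγ : 1 ≤ γ) (hS : γ ≤ #S) (hpos : ∀ a ∈ S, 1 ≤ a) :
    #(Sgamma γ n S) = γ := by
  have hfilter : Sgamma γ n S = S.filter (· ≤ kS γ n S) := by
    ext a
    simp only [Sgamma, mem_inter, mem_Icc, mem_filter]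
    exact ⟨fun h => ⟨h.1, h.2.2⟩, fun h => ⟨h.1, hpos a h.1, h.2⟩⟩
  rw [hfilter, kS_eq_orderEmbOfFin hγ hS, card_filter_le_orderEmbOfFin, Fin.val_mk]
  omega

theorem lt_of_mem_Sgamma_of_mem_sdiff (hpos : ∀ a ∈ S, 1 ≤ a) {a b : ℕ}
    (ha : a ∈ Sgamma γ n S) (hb : b ∈ S \ Sgamma γ n S) : a < b := by
  simp only [Sgamma, mem_sdiff, mem_inter, mem_Icc, not_and, not_le] at ha hb
  exact ha.2.2.trans_lt (hb.2 hb.1 (hpos b hb.1))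

end Sgamma

/-- for `|S| ≥ γ+1` the `S`-submodular inequality coincides with the
`S^γ`-submodular inequality: `Φ(S) = Φ(S^γ)`, `ρ_j(S) = ρ_j(S^γ)` for `j ∉ S`, and
`ρ_j([n]\{j}) = 0`, `ρ_j(S^γ) = 0` for `j ∈ S \ S^γ`. -/
theorem stmt_8 (n γ : ℕ) (hγ : 1 ≤ γ) (u : ℕ → ℝ) (u0 : ℝ) (hu0 : 0 < u0)
    (hnn : ∀ j ∈ Finset.Icc 1 n, 0 ≤ u j)
    (hmono : ∀ j ∈ Finset.Icc 1 n, ∀ k ∈ Finset.Icc 1 n, j ≤ k → u k ≤ u j)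
    (S : Finset ℕ) (hS : S ⊆ Finset.Icc 1 n) (hcard : γ + 1 ≤ S.card) :
    Phi γ u u0 S = Phi γ u u0 (Sgamma γ n S) ∧
    (∀ j ∈ Finset.Icc 1 n \ S,
      Phi γ u u0 (insert j S) - Phi γ u u0 S =
        Phi γ u u0 (insert j (Sgamma γ n S)) - Phi γ u u0 (Sgamma γ n S)) ∧
    (∀ j ∈ S \ Sgamma γ n S,
      Phi γ u u0 (Finset.Icc 1 n) - Phi γ u u0 ((Finset.Icc 1 n).erase j) = 0 ∧
      Phi γ u u0 (insert j (Sgamma γ n S)) - Phi γ u u0 (Sgamma γ n S) = 0) := by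
  set T := Sgamma γ n S
  have hpos : ∀ a ∈ S, 1 ≤ a := fun a ha => (mem_Icc.mp (hS ha)).1
  have hTS : T ⊆ S := Sgamma_subset
  have key : ∀ A B, A ⊆ B → B ⊆ Icc 1 n → T ⊆ A → B \ A ⊆ S \ T →
      Phi γ u u0 B = Phi γ u u0 A := fun A B hAB hB hTA hBA =>
    Phi_eq_of_forall_lt hu0 (fun j hj => hnn j (hB hj))
      (fun j hj k hk => hmono j (hB hj) k (hB hk)) hAB hTA (card_Sgamma hγ (by omega) hpos).ge
      fun a ha b hb => lt_of_mem_Sgamma_of_mem_sdiff hpos ha (hBA hb)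
  refine ⟨key T S hTS hS subset_rfl subset_rfl, fun j hj => ?_, fun j hj => ⟨?_, ?_⟩⟩
  · rw [mem_sdiff] at hj
    rw [key T S hTS hS subset_rfl subset_rfl,
      key (insert j T) (insert j S) (insert_subset_insert j hTS) (insert_subset hj.1 hS)
        (subset_insert j T) (by intro b; simp only [mem_sdiff, mem_insert]; tauto)]
  · rw [sub_eq_zero]
    refine key _ _ (erase_subset j _) subset_rfl ?_ ?_
    · exact fun a ha => mem_erase.mpr ⟨fun h => (mem_sdiff.mp hj).2 (h ▸ ha), hS (hTS ha)⟩
    · intro b; simp only [mem_sdiff, mem_erase]; grind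
  · rw [sub_eq_zero]
    refine key _ _ (subset_insert j T) (insert_subset (hS (mem_sdiff.mp hj).1) (hTS.trans hS))
      subset_rfl ?_
    intro b; simp only [mem_sdiff, mem_insert]; grind
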